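/- Let n ≥ 2 and let Ω ⊆ ℝⁿ be open and bounded. Let p ∈ ℝⁿ and R > 0 with closedBall(p, R) ⊆ Ω, and let ρ : ℝⁿ → ℝ be a smooth function with compact support contained in Ω such that ρ(x) = 1 for all x ∈ closedBall(p, R). Let μ, α, G : ℝⁿ → ℝ be measurable with 0 < μ₀ ≤ μ(x) ≤ μ₁, 1 ≤ α(x) ≤ α₁ and |G(x)| ≤ L on Ω, and α(x) ≥ 1 + ε with ε > 0 on closedBall(p, R). Let h : ℝ × ℝ → ℝ be continuous. For each natural number m define φ_m(x) = ρ(x)·sin(m·x₁), Q_m(x) = Σ_{j=2}^{n} (∂_j φ_m(x))², and the energy E(m) = ∫_Ω (1/μ(x))·[ (1/2)·G(x)·h(φ_m(x), Q_m(x)) + (1 − α(x))·(∂₁φ_m(x))² + Q_m(x) ] dx. Then E(m) → −∞ as m → ∞. -/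

import Mathlib

open MeasureTheory Filter

lemma myHasFDeriv {n : ℕ} (ρ : EuclideanSpace ℝ (Fin n) → ℝ) (hρ : ContDiff ℝ (⊤ : ℕ∞) ρ)
    (c : ℝ) (i0 : Fin n) (x : EuclideanSpace ℝ (Fin n)) :
    HasFDerivAt (fun x : EuclideanSpace ℝ (Fin n) => ρ x * Real.sin (c * x i0))
      (Real.sin (c * x i0) • fderiv ℝ ρ x
        + (ρ x * (c * Real.cos (c * x i0))) • (EuclideanSpace.proj i0 : EuclideanSpace ℝ (Fin n) →L[ℝ] ℝ)) x := by
  have hL : HasFDerivAt (fun x : EuclideanSpace ℝ (Fin n) => c * x i0)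
      (c • (EuclideanSpace.proj i0 : EuclideanSpace ℝ (Fin n) →L[ℝ] ℝ)) x := by
    simpa using ((EuclideanSpace.proj i0 : EuclideanSpace ℝ (Fin n) →L[ℝ] ℝ).hasFDerivAt (x := x)).const_mul c
  have hsin : HasFDerivAt (fun x : EuclideanSpace ℝ (Fin n) => Real.sin (c * x i0))
      (Real.cos (c * x i0) • (c • (EuclideanSpace.proj i0 : EuclideanSpace ℝ (Fin n) →L[ℝ] ℝ))) x :=
    by have := (Real.hasDerivAt_sin (c * x i0)).comp_hasFDerivAt x hL; exact this
  have hρx : HasFDerivAt ρ (fderiv ℝ ρ x) x :=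
    (hρ.differentiable (by simp)).differentiableAt.hasFDerivAt
  have := hρx.mul hsin
  refine this.congr_fderiv ?_
  module

lemma cube_integral {n : ℕ} (i0 : Fin n) (a b : Fin n → ℝ) (c : ℝ) :
    ∫ x in {x : EuclideanSpace ℝ (Fin n) | ∀ i, x i ∈ Set.Icc (a i) (b i)},
      Real.cos (c * x i0) ^ 2
    = (∫ t in Set.Icc (a i0) (b i0), Real.cos (c * t) ^ 2)
        * ∏ j ∈ Finset.univ.erase i0, (volume (Set.Icc (a j) (b j))).toReal := by
  have e : MeasurePreserving ((MeasurableEquiv.toLp 2 (Fin n → ℝ)).symm) :=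
    EuclideanSpace.volume_preserving_symm_measurableEquiv_toLp (Fin n)
  have hemb : MeasurableEmbedding ((MeasurableEquiv.toLp 2 (Fin n → ℝ)).symm) :=
    ((MeasurableEquiv.toLp 2 (Fin n → ℝ)).symm).measurableEmbedding
  have hK : {x : EuclideanSpace ℝ (Fin n) | ∀ i, x i ∈ Set.Icc (a i) (b i)}
      = ((MeasurableEquiv.toLp 2 (Fin n → ℝ)).symm) ⁻¹'
        (Set.univ.pi fun i => Set.Icc (a i) (b i)) := by
    ext x
    constructor
    · exact fun hx => fun i _ => hx i
    · exact fun hx i => hx i (Set.mem_univ i)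
  have hstep : ∫ x in {x : EuclideanSpace ℝ (Fin n) | ∀ i, x i ∈ Set.Icc (a i) (b i)},
      Real.cos (c * x i0) ^ 2
      = ∫ y in (Set.univ.pi fun i => Set.Icc (a i) (b i)),
          (fun y : Fin n → ℝ => Real.cos (c * y i0) ^ 2) y := by
    rw [hK]
    exact e.setIntegral_preimage_emb hemb (fun y => Real.cos (c * y i0) ^ 2) _
  rw [hstep]
  set g : Fin n → ℝ → ℝ := fun i t =>
    if i = i0 then Set.indicator (Set.Icc (a i) (b i)) (fun t => Real.cos (c * t) ^ 2) t
    else Set.indicator (Set.Icc (a i) (b i)) (fun _ => (1:ℝ)) t with hg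
  have hmeas : MeasurableSet (Set.univ.pi fun i => Set.Icc (a i) (b i)) :=
    MeasurableSet.univ_pi fun i => measurableSet_Icc
  rw [← integral_indicator hmeas]
  have hind : (Set.indicator (Set.univ.pi fun i => Set.Icc (a i) (b i))
      (fun y : Fin n → ℝ => Real.cos (c * y i0) ^ 2))
      = fun y => ∏ i, g i (y i) := by
    funext y
    by_cases hy : y ∈ Set.univ.pi fun i => Set.Icc (a i) (b i)
    · rw [Set.indicator_of_mem hy]
      have hprod : ∀ i, g i (y i) = if i = i0 then Real.cos (c * y i0) ^ 2 else 1 := by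
        intro i
        have hyi : y i ∈ Set.Icc (a i) (b i) := hy i (Set.mem_univ i)
        by_cases hi : i = i0
        · subst hi
          simp [hg, Set.indicator_of_mem hyi]
        · simp [hg, hi, Set.indicator_of_mem hyi]
      simp only [hprod]
      simp [Finset.prod_ite_eq' Finset.univ i0 (fun _ => Real.cos (c * y i0) ^ 2)]
    · rw [Set.indicator_of_notMem hy]
      rw [Set.mem_pi] at hy
      push_neg at hy
      obtain ⟨i, _, hi⟩ := hy
      refine (Finset.prod_eq_zero (Finset.mem_univ i) ?_).symm
      by_cases h2 : i = i0
      · subst h2; simp [hg, Set.indicator_of_notMem hi]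
      · simp [hg, h2, Set.indicator_of_notMem hi]
  rw [hind, MeasureTheory.integral_fintype_prod_volume_eq_prod (ι := Fin n) g]
  rw [← Finset.mul_prod_erase Finset.univ _ (Finset.mem_univ i0)]
  congr 1
  · simp [hg, integral_indicator measurableSet_Icc]
  · refine Finset.prod_congr rfl fun j hj => ?_
    have hj' : j ≠ i0 := Finset.ne_of_mem_erase hj
    simp [hg, hj', integral_indicator_const, ENNReal.toReal_ofReal']

lemma cos_sq_integral_lower (a b : ℝ) (hab : a ≤ b) (c : ℝ) (hc : 1 ≤ c) :
    (b - a) / 2 - 1 / c ≤ ∫ t in Set.Icc a b, Real.cos (c * t) ^ 2 := by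
  have hc0 : (0:ℝ) < c := by linarith
  rw [MeasureTheory.integral_Icc_eq_integral_Ioc, ← intervalIntegral.integral_of_le hab]
  rw [intervalIntegral.integral_comp_mul_left (fun t => Real.cos t ^ 2) (ne_of_gt hc0)]
  rw [integral_cos_sq]
  rw [smul_eq_mul]
  have h1 : -1 ≤ Real.cos (c * b) * Real.sin (c * b) := by
    nlinarith [Real.neg_one_le_sin (c*b), Real.sin_le_one (c*b),
      Real.neg_one_le_cos (c*b), Real.cos_le_one (c*b)]
  have h2 : Real.cos (c * a) * Real.sin (c * a) ≤ 1 := by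
    nlinarith [Real.neg_one_le_sin (c*a), Real.sin_le_one (c*a),
      Real.neg_one_le_cos (c*a), Real.cos_le_one (c*a)]
  rw [← sub_nonneg]
  have key : c⁻¹ * ((Real.cos (c * b) * Real.sin (c * b) - Real.cos (c * a) * Real.sin (c * a) + c * b - c * a) / 2)
      - ((b - a) / 2 - 1 / c)
      = c⁻¹ * ((Real.cos (c * b) * Real.sin (c * b) - Real.cos (c * a) * Real.sin (c * a) + 2) / 2) := by
    field_simp
    ring
  linarith [mul_nonneg (le_of_lt (inv_pos.mpr hc0))
    (by linarith : (0:ℝ) ≤ (Real.cos (c * b) * Real.sin (c * b) - Real.cos (c * a) * Real.sin (c * a) + 2) / 2), key.ge, key.le]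

set_option maxHeartbeats 2000000 in
/-- Section 5.3 of the paper: even for couplings `h(φ, (∂φ)²)` depending on
derivatives of the scalar field, the energy of the high-frequency data
`φ_m(x) = ρ(x) sin(m x₁)` in an ergoregion (`α ≥ 1 + ε` on a ball) still tends
to `-∞` as `m → ∞`. -/
theorem ergoregion_energy_tendsto_atBot_deriv_coupling (n : ℕ) (hn : 2 ≤ n)
    (Ω : Set (EuclideanSpace ℝ (Fin n)))
    (hΩopen : IsOpen Ω) (hΩbdd : Bornology.IsBounded Ω)
    (p : EuclideanSpace ℝ (Fin n)) (R : ℝ) (hR : 0 < R)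
    (hball : Metric.closedBall p R ⊆ Ω)
    (ρ : EuclideanSpace ℝ (Fin n) → ℝ) (hρ : ContDiff ℝ (⊤ : ℕ∞) ρ)
    (hρcpt : HasCompactSupport ρ) (hρsupp : tsupport ρ ⊆ Ω)
    (hρ1 : ∀ x ∈ Metric.closedBall p R, ρ x = 1)
    (μ α G : EuclideanSpace ℝ (Fin n) → ℝ)
    (hμmeas : Measurable μ) (hαmeas : Measurable α) (hGmeas : Measurable G)
    (μ₀ μ₁ α₁ L ε : ℝ)
    (hμ₀ : 0 < μ₀) (hμ₁ : 0 < μ₁) (hα₁ : 0 < α₁) (hL : 0 < L) (hε : 0 < ε)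
    (hμbound : ∀ x ∈ Ω, μ₀ ≤ μ x ∧ μ x ≤ μ₁)
    (hαbound : ∀ x ∈ Ω, 1 ≤ α x ∧ α x ≤ α₁)
    (hGbound : ∀ x ∈ Ω, |G x| ≤ L)
    (hαball : ∀ x ∈ Metric.closedBall p R, 1 + ε ≤ α x)
    (h : ℝ × ℝ → ℝ) (hh : Continuous h)
    (φ : ℕ → EuclideanSpace ℝ (Fin n) → ℝ)
    (hφ : ∀ m x, φ m x = ρ x * Real.sin (m * x ⟨0, by omega⟩))
    (Q : ℕ → EuclideanSpace ℝ (Fin n) → ℝ)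
    (hQ : ∀ m x, Q m x =
      ∑ j ∈ Finset.univ.erase (⟨0, by omega⟩ : Fin n),
        (fderiv ℝ (φ m) x (EuclideanSpace.single j 1)) ^ 2)
    (E : ℕ → ℝ)
    (hE : ∀ m, E m = ∫ x in Ω, (1 / μ x) *
      ((1 / 2) * G x * h (φ m x, Q m x)
        + (1 - α x) * (fderiv ℝ (φ m) x (EuclideanSpace.single ⟨0, by omega⟩ 1)) ^ 2
        + Q m x)) :
    Tendsto E atTop atBot := by
  classical
  have hn0 : 0 < n := by omega
  set i0 : Fin n := ⟨0, hn0⟩ with hi0def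
  -- basic facts about ρ and its derivative
  have hρcont : Continuous ρ := hρ.continuous
  have hdρcont : Continuous (fderiv ℝ ρ) := hρ.continuous_fderiv (by simp)
  obtain ⟨Mρ', hMρ'⟩ := hρcpt.exists_bound_of_continuous hρcont
  set Mρ : ℝ := max Mρ' 1 with hMρdef
  have hMρ1 : (1:ℝ) ≤ Mρ := le_max_right _ _
  have hMρ0 : (0:ℝ) ≤ Mρ := by linarith
  have hMρ : ∀ x, |ρ x| ≤ Mρ := fun x =>
    le_trans (by simpa [Real.norm_eq_abs] using hMρ' x) (le_max_left _ _)
  obtain ⟨M'', hM''⟩ := (hρcpt.fderiv ℝ).exists_bound_of_continuous hdρcont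
  set M' : ℝ := max M'' 1 with hM'def
  have hM'1 : (1:ℝ) ≤ M' := le_max_right _ _
  have hM'0 : (0:ℝ) ≤ M' := by linarith
  have hM' : ∀ x, ‖fderiv ℝ ρ x‖ ≤ M' := fun x => le_trans (hM'' x) (le_max_left _ _)
  have hdρbd : ∀ x (j : Fin n), |fderiv ℝ ρ x (EuclideanSpace.single j 1)| ≤ M' := by
    intro x j
    have := (fderiv ℝ ρ x).le_opNorm (EuclideanSpace.single j 1)
    rw [EuclideanSpace.norm_single] at this
    simp only [norm_one, mul_one] at this
    calc |fderiv ℝ ρ x (EuclideanSpace.single j 1)|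
        = ‖fderiv ℝ ρ x (EuclideanSpace.single j 1)‖ := (Real.norm_eq_abs _).symm
      _ ≤ ‖fderiv ℝ ρ x‖ := this
      _ ≤ M' := hM' x
  -- the derivative formula
  have hDall : ∀ (m : ℕ) x (j : Fin n), fderiv ℝ (φ m) x (EuclideanSpace.single j 1)
      = Real.sin (m * x i0) * fderiv ℝ ρ x (EuclideanSpace.single j 1)
        + ρ x * ((m:ℝ) * Real.cos (m * x i0)) * (if i0 = j then 1 else 0) := by
    intro m x j
    have hφm : φ m = fun x : EuclideanSpace ℝ (Fin n) => ρ x * Real.sin ((m:ℝ) * x i0) :=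
      funext fun x => hφ m x
    have hfd := (myHasFDeriv ρ hρ (m:ℝ) i0 x).fderiv
    have hproj : ∀ (v : EuclideanSpace ℝ (Fin n)),
        (EuclideanSpace.proj i0 : EuclideanSpace ℝ (Fin n) →L[ℝ] ℝ) v = v i0 := fun v => rfl
    rw [hφm, hfd]
    simp [hproj, EuclideanSpace.single_apply, mul_comm]
  have hD1 : ∀ (m : ℕ) x, fderiv ℝ (φ m) x (EuclideanSpace.single i0 1)
      = Real.sin (m * x i0) * fderiv ℝ ρ x (EuclideanSpace.single i0 1)
        + ρ x * ((m:ℝ) * Real.cos (m * x i0)) := by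
    intro m x; rw [hDall m x i0]; simp
  have hDj : ∀ (m : ℕ) x (j : Fin n), j ≠ i0 → fderiv ℝ (φ m) x (EuclideanSpace.single j 1)
      = Real.sin (m * x i0) * fderiv ℝ ρ x (EuclideanSpace.single j 1) := by
    intro m x j hj; rw [hDall m x j]; simp [Ne.symm hj]
  have hQ' : ∀ m x, Q m x = ∑ j ∈ Finset.univ.erase i0,
      (fderiv ℝ (φ m) x (EuclideanSpace.single j 1)) ^ 2 := fun m x => hQ m x
  have hQ0 : ∀ m x, 0 ≤ Q m x := by
    intro m x; rw [hQ']; exact Finset.sum_nonneg fun j _ => sq_nonneg _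
  set MQ : ℝ := n * M' ^ 2 with hMQdef
  have hMQ0 : 0 ≤ MQ := by positivity
  have hQbd : ∀ m x, Q m x ≤ MQ := by
    intro m x
    rw [hQ']
    have hterm : ∀ j ∈ Finset.univ.erase i0,
        (fderiv ℝ (φ m) x (EuclideanSpace.single j 1)) ^ 2 ≤ M' ^ 2 := by
      intro j hj
      rw [hDj m x j (Finset.ne_of_mem_erase hj)]
      have h1 : |Real.sin (m * x i0) * fderiv ℝ ρ x (EuclideanSpace.single j 1)| ≤ M' := by
        rw [abs_mul]
        calc |Real.sin ((m:ℝ) * x i0)| * |fderiv ℝ ρ x (EuclideanSpace.single j 1)|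
            ≤ 1 * M' := mul_le_mul (Real.abs_sin_le_one _) (hdρbd x j) (abs_nonneg _) one_pos.le
          _ = M' := one_mul _
      obtain ⟨ha, hb⟩ := abs_le.mp h1
      nlinarith
    calc ∑ j ∈ Finset.univ.erase i0, (fderiv ℝ (φ m) x (EuclideanSpace.single j 1)) ^ 2
        ≤ ∑ _j ∈ Finset.univ.erase i0, M' ^ 2 := Finset.sum_le_sum hterm
      _ = ((Finset.univ.erase i0).card : ℝ) * M' ^ 2 := by
          rw [Finset.sum_const, nsmul_eq_mul]
      _ ≤ (n : ℝ) * M' ^ 2 := by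
          have : (Finset.univ.erase i0).card ≤ n := by
            calc (Finset.univ.erase i0).card ≤ Finset.univ.card := Finset.card_le_card (Finset.erase_subset _ _)
              _ = n := by simp
          have := (Nat.cast_le (α := ℝ)).mpr this
          nlinarith
  have hφbd : ∀ m x, |φ m x| ≤ Mρ := by
    intro m x
    rw [hφ m x, abs_mul]
    calc |ρ x| * |Real.sin ((m:ℝ) * x i0)| ≤ Mρ * 1 :=
      mul_le_mul (hMρ x) (Real.abs_sin_le_one _) (abs_nonneg _) hMρ0
    _ = Mρ := mul_one _
  -- bound on h along the data
  set T : Set (ℝ × ℝ) := Set.Icc (-Mρ) Mρ ×ˢ Set.Icc 0 MQ with hTdef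
  have hTcpt : IsCompact T := isCompact_Icc.prod isCompact_Icc
  obtain ⟨Ch', hCh'⟩ := hTcpt.exists_bound_of_continuousOn hh.continuousOn
  set Ch : ℝ := max Ch' 0 with hChdef
  have hCh0 : 0 ≤ Ch := le_max_right _ _
  have hCh : ∀ m x, |h (φ m x, Q m x)| ≤ Ch := by
    intro m x
    have hmem : (φ m x, Q m x) ∈ T := by
      constructor
      · exact ⟨(abs_le.mp (hφbd m x)).1, (abs_le.mp (hφbd m x)).2⟩
      · exact ⟨hQ0 m x, hQbd m x⟩
    exact le_trans (by simpa [Real.norm_eq_abs] using hCh' _ hmem) (le_max_left _ _)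
  -- continuity facts
  have hx0cont : Continuous (fun x : EuclideanSpace ℝ (Fin n) => x i0) :=
    (EuclideanSpace.proj i0 : EuclideanSpace ℝ (Fin n) →L[ℝ] ℝ).continuous
  have hdcoordcont : ∀ j : Fin n,
      Continuous (fun x => fderiv ℝ ρ x (EuclideanSpace.single j 1)) := fun j =>
    (ContinuousLinearMap.apply ℝ ℝ (EuclideanSpace.single j 1)).continuous.comp hdρcont
  have hDcont : ∀ (m : ℕ) (j : Fin n),
      Continuous (fun x => fderiv ℝ (φ m) x (EuclideanSpace.single j 1)) := by
    intro m j
    have hc : Continuous (fun x : EuclideanSpace ℝ (Fin n) =>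
        Real.sin (m * x i0) * fderiv ℝ ρ x (EuclideanSpace.single j 1)
        + ρ x * ((m:ℝ) * Real.cos (m * x i0)) * (if i0 = j then 1 else 0)) :=
      ((Real.continuous_sin.comp (continuous_const.mul hx0cont)).mul (hdcoordcont j)).add
        ((hρcont.mul (continuous_const.mul
          (Real.continuous_cos.comp (continuous_const.mul hx0cont)))).mul continuous_const)
    exact hc.congr fun x => (hDall m x j).symm
  have hφcont : ∀ m, Continuous (φ m) := by
    intro m
    have hc : Continuous (fun x : EuclideanSpace ℝ (Fin n) => ρ x * Real.sin (m * x i0)) :=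
      hρcont.mul (Real.continuous_sin.comp (continuous_const.mul hx0cont))
    exact hc.congr fun x => (hφ m x).symm
  have hQcont : ∀ m, Continuous (Q m) := by
    intro m
    have hc : Continuous (fun x => ∑ j ∈ Finset.univ.erase i0,
        (fderiv ℝ (φ m) x (EuclideanSpace.single j 1)) ^ 2) :=
      continuous_finset_sum _ fun j _ => (hDcont m j).pow 2
    exact hc.congr fun x => (hQ' m x).symm
  -- geometry: a small cube inside the ball
  set s : ℝ := R / (2 * Real.sqrt n) with hsdef
  have hsqrtn : 0 < Real.sqrt n := Real.sqrt_pos.mpr (by exact_mod_cast hn0)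
  have hs0 : 0 < s := div_pos hR (by positivity)
  set K : Set (EuclideanSpace ℝ (Fin n)) :=
    {x | ∀ i, x i ∈ Set.Icc (p i - s) (p i + s)} with hKdef
  have hKball : K ⊆ Metric.ball p R := by
    intro x hx
    have hdist : dist x p ≤ Real.sqrt n * s := by
      rw [EuclideanSpace.dist_eq]
      have hle : ∑ i, dist (x i) (p i) ^ 2 ≤ ∑ _i : Fin n, s ^ 2 := by
        apply Finset.sum_le_sum
        intro i _
        have hxi := hx i
        rw [Real.dist_eq]
        have habs : |x i - p i| ≤ s := abs_le.mpr ⟨by linarith [hxi.1], by linarith [hxi.2]⟩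
        nlinarith [abs_nonneg (x i - p i), sq_abs (x i - p i)]
      calc Real.sqrt (∑ i, dist (x i) (p i) ^ 2) ≤ Real.sqrt (∑ _i : Fin n, s ^ 2) :=
            Real.sqrt_le_sqrt hle
        _ = Real.sqrt ((n : ℝ) * s ^ 2) := by
            rw [Finset.sum_const]
            congr 1
            simp [Finset.card_univ, nsmul_eq_mul]
        _ = Real.sqrt n * s := by
            rw [Real.sqrt_mul (by positivity), Real.sqrt_sq hs0.le]
    have hhalf : Real.sqrt n * s = R / 2 := by
      rw [hsdef]
      field_simp
    rw [Metric.mem_ball]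
    rw [hhalf] at hdist
    linarith
  have hKΩ : K ⊆ Ω := fun x hx => hball (Metric.ball_subset_closedBall (hKball hx))
  have hcoordmeas : ∀ i : Fin n, Measurable (fun x : EuclideanSpace ℝ (Fin n) => x i) :=
    fun i => (EuclideanSpace.proj i : EuclideanSpace ℝ (Fin n) →L[ℝ] ℝ).continuous.measurable
  have hKmeas : MeasurableSet K := by
    have hKeq : K = ⋂ i, (fun x : EuclideanSpace ℝ (Fin n) => x i) ⁻¹'
        Set.Icc (p i - s) (p i + s) := by
      ext x
      simp only [hKdef, Set.mem_setOf_eq, Set.mem_iInter, Set.mem_preimage]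
    rw [hKeq]
    exact MeasurableSet.iInter fun i => (hcoordmeas i) measurableSet_Icc
  have hΩmeas : MeasurableSet Ω := hΩopen.measurableSet
  have hΩvol : volume Ω < ⊤ := hΩbdd.measure_lt_top
  -- on the ball, ρ = 1 and its derivative vanishes
  have hballeq : ∀ x ∈ Metric.ball p R, fderiv ℝ ρ x = 0 ∧ ρ x = 1 := by
    intro x hx
    have hev : ρ =ᶠ[nhds x] fun _ => (1:ℝ) :=
      Filter.eventually_of_mem (Metric.isOpen_ball.mem_nhds hx)
        (fun y hy => hρ1 y (Metric.ball_subset_closedBall hy))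
    refine ⟨?_, hρ1 x (Metric.ball_subset_closedBall hx)⟩
    rw [hev.fderiv_eq]
    exact fderiv_const_apply 1
  have hD1K : ∀ (m : ℕ) x, x ∈ K →
      fderiv ℝ (φ m) x (EuclideanSpace.single i0 1) = (m:ℝ) * Real.cos (m * x i0) := by
    intro m x hx
    obtain ⟨hfd0, hρx1⟩ := hballeq x (hKball hx)
    rw [hD1 m x, hfd0, hρx1]
    simp
  -- constants
  set Cbig : ℝ := (L * Ch / 2 + MQ) / μ₀ with hCbigdef
  set c₀ : ℝ := (s / 2) * (2 * s) ^ (n - 1) with hc₀def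
  have hc₀0 : 0 < c₀ := by positivity
  have hKvol : volume K < ⊤ := lt_of_le_of_lt (measure_mono hKΩ) hΩvol
  have key : ∀ m : ℕ, 1 ≤ (m:ℝ) → 2 / s ≤ (m:ℝ) →
      E m ≤ Cbig * (volume Ω).toReal - (ε / μ₁ * c₀) * (m:ℝ) ^ 2 := by
    intro m hm1 hm2
    have hm0 : (0:ℝ) < m := by linarith
    set Dm : ℝ := M' + m * Mρ with hDmdef
    have hDm0 : 0 ≤ Dm := by positivity
    have hDbd : ∀ x, |fderiv ℝ (φ m) x (EuclideanSpace.single i0 1)| ≤ Dm := by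
      intro x
      rw [hD1 m x]
      have e1 : |Real.sin (m * x i0) * fderiv ℝ ρ x (EuclideanSpace.single i0 1)| ≤ M' := by
        rw [abs_mul]
        calc |Real.sin ((m:ℝ) * x i0)| * |fderiv ℝ ρ x (EuclideanSpace.single i0 1)|
            ≤ 1 * M' := mul_le_mul (Real.abs_sin_le_one _) (hdρbd x i0) (abs_nonneg _) one_pos.le
          _ = M' := one_mul _
      have e2 : |ρ x * ((m:ℝ) * Real.cos (m * x i0))| ≤ m * Mρ := by
        rw [abs_mul, abs_mul]
        have habsm : |(m:ℝ)| = (m:ℝ) := abs_of_nonneg hm0.le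
        calc |ρ x| * (|(m:ℝ)| * |Real.cos ((m:ℝ) * x i0)|) ≤ Mρ * ((m:ℝ) * 1) := by
              rw [habsm]
              apply mul_le_mul (hMρ x) ?_ (by positivity) hMρ0
              exact mul_le_mul_of_nonneg_left (Real.abs_cos_le_one _) hm0.le
          _ = (m:ℝ) * Mρ := by ring
      calc |Real.sin (m * x i0) * fderiv ℝ ρ x (EuclideanSpace.single i0 1)
          + ρ x * ((m:ℝ) * Real.cos (m * x i0))|
          ≤ |Real.sin (m * x i0) * fderiv ℝ ρ x (EuclideanSpace.single i0 1)|
            + |ρ x * ((m:ℝ) * Real.cos (m * x i0))| := abs_add_le _ _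
        _ ≤ Dm := by rw [hDmdef]; linarith
    -- pointwise bounds on the integrand pieces on Ω
    have hAbd : ∀ x ∈ Ω, |(1 / 2) * G x * h (φ m x, Q m x)| ≤ L * Ch / 2 := by
      intro x hx
      rw [abs_mul, abs_mul]
      have : |(1:ℝ)/2| = 1/2 := by norm_num
      rw [this]
      calc 1/2 * |G x| * |h (φ m x, Q m x)| ≤ 1/2 * L * Ch := by
            apply mul_le_mul ?_ (hCh m x) (abs_nonneg _) (by positivity)
            exact mul_le_mul_of_nonneg_left (hGbound x hx) (by norm_num)
        _ = L * Ch / 2 := by ring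
    have hBbd : ∀ x ∈ Ω, |(1 - α x) * (fderiv ℝ (φ m) x (EuclideanSpace.single i0 1)) ^ 2|
        ≤ α₁ * Dm ^ 2 := by
      intro x hx
      have hαx := hαbound x hx
      rw [abs_mul]
      have h1α : |1 - α x| ≤ α₁ := by
        rw [abs_le]
        constructor <;> linarith [hαx.1, hαx.2]
      have hsq : |(fderiv ℝ (φ m) x (EuclideanSpace.single i0 1)) ^ 2| ≤ Dm ^ 2 := by
        rw [abs_of_nonneg (sq_nonneg _)]
        have := hDbd x
        nlinarith [abs_nonneg (fderiv ℝ (φ m) x (EuclideanSpace.single i0 1)),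
          sq_abs (fderiv ℝ (φ m) x (EuclideanSpace.single i0 1))]
      exact mul_le_mul h1α hsq (abs_nonneg _) hα₁.le
    set Bf : ℝ := (1 / μ₀) * (L * Ch / 2 + α₁ * Dm ^ 2 + MQ) with hBfdef
    have hfbd : ∀ x ∈ Ω, |(1 / μ x) * ((1 / 2) * G x * h (φ m x, Q m x)
        + (1 - α x) * (fderiv ℝ (φ m) x (EuclideanSpace.single i0 1)) ^ 2 + Q m x)| ≤ Bf := by
      intro x hx
      have hμx := hμbound x hx
      have hμpos : 0 < μ x := lt_of_lt_of_le hμ₀ hμx.1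
      rw [abs_mul]
      have hinv : |1 / μ x| ≤ 1 / μ₀ := by
        rw [abs_of_pos (by positivity)]
        exact one_div_le_one_div_of_le hμ₀ hμx.1
      have hinner : |(1 / 2) * G x * h (φ m x, Q m x)
          + (1 - α x) * (fderiv ℝ (φ m) x (EuclideanSpace.single i0 1)) ^ 2 + Q m x|
          ≤ L * Ch / 2 + α₁ * Dm ^ 2 + MQ := by
        have hq : |Q m x| ≤ MQ := by
          rw [abs_of_nonneg (hQ0 m x)]; exact hQbd m x
        calc |(1 / 2) * G x * h (φ m x, Q m x)
            + (1 - α x) * (fderiv ℝ (φ m) x (EuclideanSpace.single i0 1)) ^ 2 + Q m x|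
            ≤ |(1 / 2) * G x * h (φ m x, Q m x)
              + (1 - α x) * (fderiv ℝ (φ m) x (EuclideanSpace.single i0 1)) ^ 2| + |Q m x| :=
              abs_add_le _ _
          _ ≤ (|(1 / 2) * G x * h (φ m x, Q m x)|
              + |(1 - α x) * (fderiv ℝ (φ m) x (EuclideanSpace.single i0 1)) ^ 2|) + |Q m x| := by
              exact add_le_add (abs_add_le _ _) le_rfl
          _ ≤ L * Ch / 2 + α₁ * Dm ^ 2 + MQ :=
              add_le_add (add_le_add (hAbd x hx) (hBbd x hx)) hq
      calc |1 / μ x| * |(1 / 2) * G x * h (φ m x, Q m x)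
          + (1 - α x) * (fderiv ℝ (φ m) x (EuclideanSpace.single i0 1)) ^ 2 + Q m x|
          ≤ (1 / μ₀) * (L * Ch / 2 + α₁ * Dm ^ 2 + MQ) :=
            mul_le_mul hinv hinner (abs_nonneg _) (by positivity)
        _ = Bf := hBfdef.symm
    -- measurability and integrability
    have hfmeas : Measurable (fun x => (1 / μ x) * ((1 / 2) * G x * h (φ m x, Q m x)
        + (1 - α x) * (fderiv ℝ (φ m) x (EuclideanSpace.single i0 1)) ^ 2 + Q m x)) := by
      apply Measurable.mul
      · exact measurable_const.div hμmeas
      · exact (((measurable_const.mul hGmeas).mul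
            (hh.measurable.comp ((hφcont m).measurable.prodMk (hQcont m).measurable))).add
          ((measurable_const.sub hαmeas).mul (((hDcont m i0).measurable).pow measurable_const))).add
          (hQcont m).measurable
    have hgmeas : Measurable (fun x => (1 / μ x) *
        ((1 - α x) * (fderiv ℝ (φ m) x (EuclideanSpace.single i0 1)) ^ 2)) := by
      exact (measurable_const.div hμmeas).mul
        ((measurable_const.sub hαmeas).mul (((hDcont m i0).measurable).pow measurable_const))
    have hIf : IntegrableOn (fun x => (1 / μ x) * ((1 / 2) * G x * h (φ m x, Q m x)
        + (1 - α x) * (fderiv ℝ (φ m) x (EuclideanSpace.single i0 1)) ^ 2 + Q m x)) Ω := by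
      apply Integrable.mono' (g := fun _ => Bf) (integrableOn_const hΩvol.ne)
        hfmeas.aestronglyMeasurable
      refine (ae_restrict_iff' hΩmeas).mpr (Filter.Eventually.of_forall fun x hx => ?_)
      rw [Real.norm_eq_abs]
      exact hfbd x hx
    have hgbd : ∀ x ∈ Ω, |(1 / μ x) *
        ((1 - α x) * (fderiv ℝ (φ m) x (EuclideanSpace.single i0 1)) ^ 2)|
        ≤ (1 / μ₀) * (α₁ * Dm ^ 2) := by
      intro x hx
      have hμx := hμbound x hx
      have hμpos : 0 < μ x := lt_of_lt_of_le hμ₀ hμx.1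
      rw [abs_mul]
      have hinv : |1 / μ x| ≤ 1 / μ₀ := by
        rw [abs_of_pos (by positivity)]
        exact one_div_le_one_div_of_le hμ₀ hμx.1
      exact mul_le_mul hinv (hBbd x hx) (abs_nonneg _) (by positivity)
    have hIg : IntegrableOn (fun x => (1 / μ x) *
        ((1 - α x) * (fderiv ℝ (φ m) x (EuclideanSpace.single i0 1)) ^ 2)) Ω := by
      apply Integrable.mono' (g := fun _ => (1 / μ₀) * (α₁ * Dm ^ 2))
        (integrableOn_const hΩvol.ne) hgmeas.aestronglyMeasurable
      refine (ae_restrict_iff' hΩmeas).mpr (Filter.Eventually.of_forall fun x hx => ?_)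
      rw [Real.norm_eq_abs]
      exact hgbd x hx
    -- pointwise comparison f ≤ Cbig + g on Ω
    have hfg : ∀ x ∈ Ω, (1 / μ x) * ((1 / 2) * G x * h (φ m x, Q m x)
        + (1 - α x) * (fderiv ℝ (φ m) x (EuclideanSpace.single i0 1)) ^ 2 + Q m x)
        ≤ Cbig + (1 / μ x) *
          ((1 - α x) * (fderiv ℝ (φ m) x (EuclideanSpace.single i0 1)) ^ 2) := by
      intro x hx
      have hμx := hμbound x hx
      have hμpos : 0 < μ x := lt_of_lt_of_le hμ₀ hμx.1
      have hsplit : (1 / μ x) * ((1 / 2) * G x * h (φ m x, Q m x)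
          + (1 - α x) * (fderiv ℝ (φ m) x (EuclideanSpace.single i0 1)) ^ 2 + Q m x)
          = (1 / μ x) * ((1 / 2) * G x * h (φ m x, Q m x) + Q m x)
            + (1 / μ x) * ((1 - α x) * (fderiv ℝ (φ m) x (EuclideanSpace.single i0 1)) ^ 2) := by
        ring
      rw [hsplit]
      have hAC : (1 / 2) * G x * h (φ m x, Q m x) + Q m x ≤ L * Ch / 2 + MQ := by
        have h1 := hAbd x hx
        have h2 : Q m x ≤ MQ := hQbd m x
        have := (abs_le.mp h1).2
        linarith
      have hstep : (1 / μ x) * ((1 / 2) * G x * h (φ m x, Q m x) + Q m x) ≤ Cbig := by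
        calc (1 / μ x) * ((1 / 2) * G x * h (φ m x, Q m x) + Q m x)
            ≤ (1 / μ x) * (L * Ch / 2 + MQ) :=
              mul_le_mul_of_nonneg_left hAC (by positivity)
          _ ≤ (1 / μ₀) * (L * Ch / 2 + MQ) := by
              apply mul_le_mul_of_nonneg_right ?_ (by positivity)
              exact one_div_le_one_div_of_le hμ₀ hμx.1
          _ = Cbig := by rw [hCbigdef]; ring
      linarith
    -- integral comparisons
    have hEm : E m = ∫ x in Ω, (1 / μ x) * ((1 / 2) * G x * h (φ m x, Q m x)
        + (1 - α x) * (fderiv ℝ (φ m) x (EuclideanSpace.single i0 1)) ^ 2 + Q m x) := hE m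
    have step1 : E m ≤ ∫ x in Ω, (Cbig + (1 / μ x) *
        ((1 - α x) * (fderiv ℝ (φ m) x (EuclideanSpace.single i0 1)) ^ 2)) := by
      rw [hEm]
      exact setIntegral_mono_on hIf ((integrableOn_const hΩvol.ne).add hIg) hΩmeas hfg
    have step2 : ∫ x in Ω, (Cbig + (1 / μ x) *
        ((1 - α x) * (fderiv ℝ (φ m) x (EuclideanSpace.single i0 1)) ^ 2))
        = Cbig * (volume Ω).toReal + ∫ x in Ω, (1 / μ x) *
          ((1 - α x) * (fderiv ℝ (φ m) x (EuclideanSpace.single i0 1)) ^ 2) := by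
      rw [integral_add (integrableOn_const (C := Cbig) hΩvol.ne) hIg, setIntegral_const,
        smul_eq_mul, mul_comm, measureReal_def]
    have step3 : ∫ x in Ω, (1 / μ x) *
        ((1 - α x) * (fderiv ℝ (φ m) x (EuclideanSpace.single i0 1)) ^ 2)
        ≤ ∫ x in K, (1 / μ x) *
          ((1 - α x) * (fderiv ℝ (φ m) x (EuclideanSpace.single i0 1)) ^ 2) := by
      have hneg : ∫ x in K, -((1 / μ x) *
          ((1 - α x) * (fderiv ℝ (φ m) x (EuclideanSpace.single i0 1)) ^ 2))
          ≤ ∫ x in Ω, -((1 / μ x) *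
            ((1 - α x) * (fderiv ℝ (φ m) x (EuclideanSpace.single i0 1)) ^ 2)) := by
        apply setIntegral_mono_set hIg.neg ?_ (HasSubset.Subset.eventuallyLE hKΩ)
        refine (ae_restrict_iff' hΩmeas).mpr (Filter.Eventually.of_forall fun x hx => ?_)
        have hμx := hμbound x hx
        have hαx := hαbound x hx
        have hμpos : 0 < μ x := lt_of_lt_of_le hμ₀ hμx.1
        have hle : (1 / μ x) * ((1 - α x) * (fderiv ℝ (φ m) x (EuclideanSpace.single i0 1)) ^ 2)
            ≤ 0 := by
          apply mul_nonpos_of_nonneg_of_nonpos (by positivity)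
          apply mul_nonpos_of_nonpos_of_nonneg (by linarith [hαx.1]) (sq_nonneg _)
        simpa using hle
      rw [integral_neg, integral_neg] at hneg
      linarith
    have hgK : IntegrableOn (fun x => (1 / μ x) *
        ((1 - α x) * (fderiv ℝ (φ m) x (EuclideanSpace.single i0 1)) ^ 2)) K :=
      hIg.mono_set hKΩ
    have hRcont : Continuous (fun x : EuclideanSpace ℝ (Fin n) =>
        -(ε / μ₁) * ((m:ℝ) ^ 2 * Real.cos (m * x i0) ^ 2)) := by
      exact continuous_const.mul (continuous_const.mul
        ((Real.continuous_cos.comp (continuous_const.mul hx0cont)).pow 2))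
    have hRint : IntegrableOn (fun x : EuclideanSpace ℝ (Fin n) =>
        -(ε / μ₁) * ((m:ℝ) ^ 2 * Real.cos (m * x i0) ^ 2)) K := by
      apply Integrable.mono' (g := fun _ => (ε / μ₁) * (m:ℝ) ^ 2)
        (integrableOn_const hKvol.ne) hRcont.aestronglyMeasurable
      refine (ae_restrict_iff' hKmeas).mpr (Filter.Eventually.of_forall fun x _ => ?_)
      rw [Real.norm_eq_abs, abs_mul]
      have h1 : |-(ε / μ₁)| = ε / μ₁ := by
        rw [abs_neg, abs_of_pos (by positivity)]
      rw [h1, abs_mul]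
      have h2 : |((m:ℝ) ^ 2)| = (m:ℝ) ^ 2 := abs_of_nonneg (sq_nonneg _)
      rw [h2]
      have h3 : |Real.cos ((m:ℝ) * x i0) ^ 2| ≤ 1 := by
        rw [abs_of_nonneg (sq_nonneg _)]
        nlinarith [Real.abs_cos_le_one ((m:ℝ) * x i0), abs_nonneg (Real.cos ((m:ℝ) * x i0)),
          sq_abs (Real.cos ((m:ℝ) * x i0))]
      calc ε / μ₁ * ((m:ℝ) ^ 2 * |Real.cos ((m:ℝ) * x i0) ^ 2|)
          ≤ ε / μ₁ * ((m:ℝ) ^ 2 * 1) := by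
            apply mul_le_mul_of_nonneg_left
              (mul_le_mul_of_nonneg_left h3 (sq_nonneg _)) (le_of_lt (div_pos hε hμ₁))
        _ = ε / μ₁ * (m:ℝ) ^ 2 := by ring
    have step4 : ∫ x in K, (1 / μ x) *
        ((1 - α x) * (fderiv ℝ (φ m) x (EuclideanSpace.single i0 1)) ^ 2)
        ≤ ∫ x in K, -(ε / μ₁) * ((m:ℝ) ^ 2 * Real.cos (m * x i0) ^ 2) := by
      apply setIntegral_mono_on hgK hRint hKmeas
      intro x hx
      have hxΩ := hKΩ hx
      have hμx := hμbound x hxΩ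
      have hμpos : 0 < μ x := lt_of_lt_of_le hμ₀ hμx.1
      have hαx : 1 + ε ≤ α x := hαball x (Metric.ball_subset_closedBall (hKball hx))
      rw [hD1K m x hx]
      have ht : (0:ℝ) ≤ ((m:ℝ) * Real.cos (m * x i0)) ^ 2 := sq_nonneg _
      calc (1 / μ x) * ((1 - α x) * ((m:ℝ) * Real.cos (m * x i0)) ^ 2)
          ≤ (1 / μ x) * (-ε * ((m:ℝ) * Real.cos (m * x i0)) ^ 2) := by
            apply mul_le_mul_of_nonneg_left ?_ (by positivity)
            exact mul_le_mul_of_nonneg_right (by linarith) ht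
        _ ≤ (1 / μ₁) * (-ε * ((m:ℝ) * Real.cos (m * x i0)) ^ 2) := by
            apply mul_le_mul_of_nonpos_right ?_ (by nlinarith)
            exact one_div_le_one_div_of_le hμpos hμx.2
        _ = -(ε / μ₁) * ((m:ℝ) ^ 2 * Real.cos (m * x i0) ^ 2) := by ring
    -- evaluate the integral over the cube
    have hIcc : ∀ j : Fin n, (volume (Set.Icc (p j - s) (p j + s))).toReal = 2 * s := by
      intro j
      rw [Real.volume_Icc, ENNReal.toReal_ofReal (by linarith)]
      ring
    have hprodv : (∏ j ∈ Finset.univ.erase i0,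
        (volume (Set.Icc (p j - s) (p j + s))).toReal) = (2 * s) ^ (n - 1) := by
      rw [Finset.prod_congr rfl (fun j _ => hIcc j), Finset.prod_const]
      congr 1
      rw [Finset.card_erase_of_mem (Finset.mem_univ _)]
      simp
    have hIm : s / 2 ≤ ∫ t in Set.Icc (p i0 - s) (p i0 + s), Real.cos (m * t) ^ 2 := by
      have hlow := cos_sq_integral_lower (p i0 - s) (p i0 + s) (by linarith) m hm1
      have h2sm : 2 ≤ s * m := by
        have := (div_le_iff₀ hs0).mp hm2
        linarith [mul_comm (m:ℝ) s]
      have h1m : 1 / (m:ℝ) ≤ s / 2 := by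
        rw [div_le_div_iff₀ hm0 two_pos]
        nlinarith
      have heq : ((p i0 + s) - (p i0 - s)) / 2 = s := by ring
      linarith
    have hKint : (s / 2) * ((2 * s) ^ (n - 1)) ≤ ∫ x in K, Real.cos (m * x i0) ^ 2 := by
      rw [hKdef]
      rw [show ({x : EuclideanSpace ℝ (Fin n) | ∀ i, x i ∈ Set.Icc (p i - s) (p i + s)})
        = {x : EuclideanSpace ℝ (Fin n) |
            ∀ i, x i ∈ Set.Icc ((fun i => p i - s) i) ((fun i => p i + s) i)} from rfl]
      rw [cube_integral i0 (fun i => p i - s) (fun i => p i + s) (m : ℝ)]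
      rw [hprodv]
      exact mul_le_mul_of_nonneg_right hIm (by positivity)
    have step5 : ∫ x in K, -(ε / μ₁) * ((m:ℝ) ^ 2 * Real.cos (m * x i0) ^ 2)
        ≤ -(ε / μ₁ * c₀) * (m:ℝ) ^ 2 := by
      have hfun : (fun x : EuclideanSpace ℝ (Fin n) =>
          -(ε / μ₁) * ((m:ℝ) ^ 2 * Real.cos (m * x i0) ^ 2))
          = fun x => (-(ε / μ₁) * (m:ℝ) ^ 2) * Real.cos (m * x i0) ^ 2 := by
        funext x; ring
      rw [hfun, integral_const_mul]
      calc (-(ε / μ₁) * (m:ℝ) ^ 2) * ∫ x in K, Real.cos (m * x i0) ^ 2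
          ≤ (-(ε / μ₁) * (m:ℝ) ^ 2) * ((s / 2) * ((2 * s) ^ (n - 1))) := by
            apply mul_le_mul_of_nonpos_left hKint
            nlinarith [sq_nonneg (m:ℝ), div_pos hε hμ₁]
        _ = -(ε / μ₁ * c₀) * (m:ℝ) ^ 2 := by rw [hc₀def]; ring
    linarith [step1, step2.le, step2.ge, step3, step4, step5]
  -- conclude
  have hC : 0 < ε / μ₁ * c₀ := mul_pos (div_pos hε hμ₁) hc₀0
  have hlim : Tendsto (fun m : ℕ => Cbig * (volume Ω).toReal - (ε / μ₁ * c₀) * (m:ℝ) ^ 2)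
      atTop atBot := by
    have h1 : Tendsto (fun m : ℕ => (m:ℝ) ^ 2) atTop atTop :=
      (tendsto_pow_atTop two_ne_zero).comp tendsto_natCast_atTop_atTop
    have h2 : Tendsto (fun m : ℕ => (ε / μ₁ * c₀) * (m:ℝ) ^ 2) atTop atTop :=
      h1.const_mul_atTop hC
    have h3 : Tendsto (fun m : ℕ => -((ε / μ₁ * c₀) * (m:ℝ) ^ 2)) atTop atBot :=
      tendsto_neg_atTop_atBot.comp h2
    have h4 := tendsto_atBot_add_const_left atTop (Cbig * (volume Ω).toReal) h3
    simpa [sub_eq_add_neg] using h4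
  apply tendsto_atBot_mono' atTop ?_ hlim
  obtain ⟨N, hN⟩ := exists_nat_ge (2 / s)
  refine Filter.eventually_atTop.mpr ⟨max N 1, fun m hm => ?_⟩
  have h1 : (1:ℝ) ≤ (m:ℝ) := by
    have : 1 ≤ m := le_trans (le_max_right N 1) hm
    exact_mod_cast this
  have h2 : 2 / s ≤ (m:ℝ) := by
    have : N ≤ m := le_trans (le_max_left N 1) hm
    exact le_trans hN (by exact_mod_cast this)
  exact key m h1 h2
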